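/- Let n ≥ 1 and let a₁,…,a_n, b₁,…,b_n be real numbers with 0 < b_j < a_j/2 for all j. Then for every sufficiently small ε > 0 (in particular for all ε with 0 < ε < 2√(b_j) for each j) there exists an injective C^∞ map Ψ from the polydisc P(2√(b₁)−ε, …, 2√(b_n)−ε) = {z ∈ ℂⁿ : |z_j| < 2√(b_j)−ε for all j} into ℂⁿ such that at every point the derivative of Ψ preserves the standard symplectic form ω₀, and the image of Ψ is contained in the polyannulus A(a₁,b₁) × ⋯ × A(a_n,b_n), which is itself contained in the polydisc P(√(a₁+2b₁), …, √(a_n+2b_n)). -/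

import Mathlib

/-!
On each factor the disc of radius `r` is mapped to the annulus in action-angle form: `x + iy`
goes to the point of polar radius `√(2F(y))` and angle `-x / f(y)`, where
`f(y) = K √(r² - y²)` is a multiple of the half-width of the disc at height `y` and `F' = f`.
In polar coordinates the area form is `d(ρ²/2) ∧ dθ`, whose pull-back is
`dF ∧ d(-x/f) = f dy ∧ (-dx/f) = dx ∧ dy`. The map is injective as soon as the angles stay in
`(-π, π)`, i.e. `K > 1/π`, and lands in `A(a, b)` as soon as the range of `2F`, of length
`K π r²`, is shorter than `4b`. Such a `K` exists because `π r² < 4π b`.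
-/

/-- The standard symplectic form `ω₀ = Σⱼ dxⱼ ∧ dyⱼ` on `ℂⁿ ≅ ℝ^{2n}`,
evaluated on a pair of tangent vectors. -/
def stdSymp (n : ℕ) (v w : Fin n → ℂ) : ℝ :=
  ∑ j, ((v j).re * (w j).im - (v j).im * (w j).re)

open Complex Set Real
open scoped ContDiff

def areaForm (v w : ℂ) : ℝ := v.re * w.im - v.im * w.re

theorem areaForm_map (D : ℂ →L[ℝ] ℂ) (v w : ℂ) :
    areaForm (D v) (D w) = areaForm (D 1) (D I) * areaForm v w := by
  have hD (u : ℂ) : D u = u.re • D 1 + u.im • D I := by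
    rw [← map_smul, ← map_smul, ← map_add]
    congr 1
    apply Complex.ext <;> simp
  simp only [areaForm, hD v, hD w, add_re, add_im, smul_re, smul_im, smul_eq_mul]
  ring

theorem stdSymp_piMap {n : ℕ} (D : Fin n → ℂ →L[ℝ] ℂ)
    (hD : ∀ j v w, areaForm (D j v) (D j w) = areaForm v w) (v w : Fin n → ℂ) :
    stdSymp n (ContinuousLinearMap.piMap D v) (ContinuousLinearMap.piMap D w) = stdSymp n v w :=
  Finset.sum_congr rfl fun j _ => hD j (v j) (w j)

section Slices

variable {E : Type*} [NormedAddCommGroup E] [NormedSpace ℝ E] {φ : ℂ → E}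
  {D : ℂ →L[ℝ] E} {z : ℂ}

theorem HasFDerivAt.hasDerivAt_horizontal (h : HasFDerivAt φ D z) :
    HasDerivAt (fun t : ℝ => φ (t + z.im * I)) (D 1) z.re := by
  refine h.comp_hasDerivAt_of_eq z.re ?_ (re_add_im z).symm
  simpa using (ofRealCLM.hasDerivAt (x := z.re)).add_const (z.im * I : ℂ)

theorem HasFDerivAt.hasDerivAt_vertical (h : HasFDerivAt φ D z) :
    HasDerivAt (fun t : ℝ => φ (z.re + t * I)) (D I) z.im := by
  refine h.comp_hasDerivAt_of_eq z.im ?_ (re_add_im z).symm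
  simpa using ((ofRealCLM.hasDerivAt (x := z.im)).mul_const I).const_add (z.re : ℂ)

end Slices

section PiMap

variable {ι : Type*} {E F : ι → Type*}

theorem Set.InjOn.piMap {f : ∀ i, E i → F i} {s : ∀ i, Set (E i)}
    (h : ∀ i, InjOn (f i) (s i)) : InjOn (Pi.map f) (univ.pi s) :=
  fun _ hx _ hy hxy => funext fun i => h i (hx i trivial) (hy i trivial) (congrFun hxy i)

variable [Fintype ι] {𝕜 : Type*} [NontriviallyNormedField 𝕜]
  [∀ i, NormedAddCommGroup (E i)] [∀ i, NormedSpace 𝕜 (E i)]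
  [∀ i, NormedAddCommGroup (F i)] [∀ i, NormedSpace 𝕜 (F i)]
  {f : ∀ i, E i → F i} {x : ∀ i, E i}

theorem HasFDerivAt.piMap {f' : ∀ i, E i →L[𝕜] F i}
    (h : ∀ i, HasFDerivAt (f i) (f' i) (x i)) :
    HasFDerivAt (Pi.map f) (ContinuousLinearMap.piMap f') x :=
  hasFDerivAt_pi.2 fun i => (h i).comp x (hasFDerivAt_apply i x)

theorem ContDiffAt.piMap {n : WithTop ℕ∞} (h : ∀ i, ContDiffAt 𝕜 n (f i) (x i)) :
    ContDiffAt 𝕜 n (Pi.map f) x :=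
  contDiffAt_pi.2 fun i =>
    (h i).comp x (ContinuousLinearMap.proj i : (∀ i, E i) →L[𝕜] E i).contDiff.contDiffAt

end PiMap

noncomputable def annulusMap (F f : ℝ → ℝ) (z : ℂ) : ℂ :=
  √(2 * F z.im) * cexp (↑(-(z.re / f z.im)) * I)

section AnnulusMap

variable {F f : ℝ → ℝ} {z : ℂ}

theorem norm_annulusMap (F f : ℝ → ℝ) (z : ℂ) :
    ‖annulusMap F f z‖ = √(2 * F z.im) := by
  rw [annulusMap, norm_mul, norm_exp_ofReal_mul_I, mul_one,
    Complex.norm_of_nonneg (Real.sqrt_nonneg _)]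

theorem annulusMap_injOn {s : Set ℂ} (hF : InjOn F (im '' s)) (hFpos : ∀ z ∈ s, 0 < F z.im)
    (hre : ∀ z ∈ s, |z.re| < π * f z.im) : InjOn (annulusMap F f) s := by
  intro z hz w hw hzw
  have him : z.im = w.im := by
    have h := congrArg norm hzw
    rw [norm_annulusMap, norm_annulusMap,
      Real.sqrt_inj (by linarith [hFpos z hz]) (by linarith [hFpos w hw])] at h
    exact hF (mem_image_of_mem _ hz) (mem_image_of_mem _ hw) (by linarith)
  have hexp : cexp (↑(-(z.re / f z.im)) * I) = cexp (↑(-(w.re / f z.im)) * I) := by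
    rw [annulusMap, annulusMap, ← him] at hzw
    exact mul_left_cancel₀
      (ofReal_ne_zero.2 (Real.sqrt_pos.2 (by linarith [hFpos z hz])).ne') hzw
  have hf : 0 < f z.im := by nlinarith [abs_nonneg z.re, hre z hz, pi_pos]
  have harg (u : ℂ) (hu : u ∈ s) (hui : u.im = z.im) :
      arg (cexp (↑(-(u.re / f z.im)) * I)) = -(u.re / f z.im) := by
    obtain ⟨h₁, h₂⟩ := abs_lt.1 (hre u hu)
    rw [hui] at h₁ h₂
    rw [arg_exp_mul_I, toIocMod_eq_self]
    constructor
    · rw [neg_lt_neg_iff, div_lt_iff₀ hf]; linarith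
    · rw [neg_le, le_div_iff₀ hf]; linarith
  have hre_eq := congrArg arg hexp
  rw [harg z hz rfl, harg w hw him.symm, neg_inj, div_left_inj' hf.ne'] at hre_eq
  exact Complex.ext hre_eq him

theorem contDiffAt_annulusMap {n : WithTop ℕ∞} (hF : ContDiffAt ℝ n F z.im)
    (hf : ContDiffAt ℝ n f z.im) (hFpos : 0 < F z.im) (hf0 : f z.im ≠ 0) :
    ContDiffAt ℝ n (annulusMap F f) z := by
  have hFi : ContDiffAt ℝ n (fun z : ℂ => F z.im) z := hF.comp z imCLM.contDiff.contDiffAt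
  have hfi : ContDiffAt ℝ n (fun z : ℂ => f z.im) z := hf.comp z imCLM.contDiff.contDiffAt
  have hR : ContDiffAt ℝ n (fun z : ℂ => (√(2 * F z.im) : ℂ)) z :=
    ofRealCLM.contDiff.contDiffAt.comp z
      ((Real.contDiffAt_sqrt (by positivity)).comp z (hFi.const_smul (2 : ℝ)))
  have hθ : ContDiffAt ℝ n (fun z : ℂ => ((-(z.re / f z.im) : ℝ) : ℂ)) z :=
    ofRealCLM.contDiff.contDiffAt.comp z (reCLM.contDiff.contDiffAt.div hfi hf0).neg
  exact hR.mul (contDiff_exp.contDiffAt.comp z (hθ.mul contDiffAt_const))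

theorem differentiableAt_annulusMap (hF : DifferentiableAt ℝ F z.im)
    (hf : DifferentiableAt ℝ f z.im) (hFpos : 0 < F z.im) (hf0 : f z.im ≠ 0) :
    DifferentiableAt ℝ (annulusMap F f) z := by
  have hR : DifferentiableAt ℝ (fun z : ℂ => √(2 * F z.im)) z := by
    fun_prop (disch := positivity)
  have hθ : DifferentiableAt ℝ (fun z : ℂ => -(z.re / f z.im)) z := by
    fun_prop (disch := assumption)
  exact (ofRealCLM.differentiableAt.comp z hR).mul
    (differentiableAt_exp.comp z ((ofRealCLM.differentiableAt.comp z hθ).mul_const I))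

theorem areaForm_fderiv_annulusMap (hF : HasDerivAt F (f z.im) z.im)
    (hf : DifferentiableAt ℝ f z.im) (hFpos : 0 < F z.im) (hf0 : f z.im ≠ 0) (v w : ℂ) :
    areaForm (fderiv ℝ (annulusMap F f) z v) (fderiv ℝ (annulusMap F f) z w) =
      areaForm v w := by
  set D := fderiv ℝ (annulusMap F f) z
  have hD : HasFDerivAt (annulusMap F f) D z :=
    (differentiableAt_annulusMap hF.differentiableAt hf hFpos hf0).hasFDerivAt
  set R := √(2 * F z.im)
  have hR : 0 < R := Real.sqrt_pos.2 (by linarith)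
  set E := cexp (↑(-(z.re / f z.im)) * I)
  have hE : E.re ^ 2 + E.im ^ 2 = 1 := by
    have h : ‖E‖ ^ 2 = 1 := by rw [norm_exp_ofReal_mul_I, one_pow]
    rw [Complex.sq_norm, normSq_apply] at h
    linear_combination h
  have hRd : HasDerivAt (fun t => √(2 * F t)) (f z.im / R) z.im := by
    convert ((hF.const_mul 2).sqrt (by positivity)) using 1
    field_simp
    rfl
  have hD1 : D 1 = R * (E * (↑(-(1 / f z.im)) * I)) := by
    refine hD.hasDerivAt_horizontal.unique ?_
    simp only [annulusMap, add_re, ofReal_re, mul_re, I_re, mul_zero, ofReal_im, I_im, mul_one,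
      sub_self, add_zero, add_im, mul_im, zero_add]
    exact ((((hasDerivAt_id z.re).div_const (f z.im)).neg.ofReal_comp).mul_const I).cexp.const_mul _
  obtain ⟨θ', hθ'⟩ : ∃ θ', HasDerivAt (fun t => -(z.re / f t)) θ' z.im :=
    ⟨_, ((hasDerivAt_const _ z.re).div hf.hasDerivAt hf0).neg⟩
  have hDI : D I = ↑(f z.im / R) * E + R * (E * (↑θ' * I)) := by
    refine hD.hasDerivAt_vertical.unique ?_
    simp only [annulusMap, add_re, ofReal_re, mul_re, I_re, mul_zero, ofReal_im, I_im, mul_one,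
      sub_self, add_zero, add_im, mul_im, zero_add]
    exact hRd.ofReal_comp.mul ((hθ'.ofReal_comp.mul_const I).cexp)
  -- Only the radial part `(f/R) E` of `∂ᵧ` pairs with `∂ₓ = -i R E / f`, and `|E| = 1`.
  have hJac : areaForm (D 1) (D I) = 1 := by
    rw [hD1, hDI]
    simp only [areaForm, mul_re, mul_im, add_re, add_im, I_re, I_im, ofReal_re, ofReal_im]
    field_simp
    linear_combination (R * f z.im) * hE
  rw [areaForm_map, hJac, one_mul]

end AnnulusMap

/-- The primitive of `y ↦ √(r² - y²)` vanishing at `0`. -/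
noncomputable def semicirclePrimitive (r y : ℝ) : ℝ :=
  (y * √(r ^ 2 - y ^ 2) + r ^ 2 * Real.arcsin (y / r)) / 2

section Semicircle

variable {r y : ℝ}

theorem continuous_semicirclePrimitive (r : ℝ) : Continuous (semicirclePrimitive r) := by
  unfold semicirclePrimitive
  fun_prop

theorem hasDerivAt_semicirclePrimitive (hy : |y| < r) :
    HasDerivAt (semicirclePrimitive r) √(r ^ 2 - y ^ 2) y := by
  have hr : 0 < r := (abs_nonneg y).trans_lt hy
  obtain ⟨hy₁, hy₂⟩ := abs_lt.1 hy
  have hpos : 0 < r ^ 2 - y ^ 2 := by nlinarith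
  have hs := Real.sq_sqrt hpos.le
  have hinner : HasDerivAt (fun t => r ^ 2 - t ^ 2) (-(2 * y)) y := by
    simpa using (hasDerivAt_pow 2 y).const_sub (r ^ 2)
  have harc : HasDerivAt (fun t => Real.arcsin (t / r))
      (1 / √(1 - (y / r) ^ 2) * (1 / r)) y :=
    (Real.hasDerivAt_arcsin (by rw [ne_eq, div_eq_iff hr.ne']; linarith)
      (by rw [ne_eq, div_eq_iff hr.ne']; linarith)).comp y ((hasDerivAt_id y).div_const r)
  have h1 : 1 - (y / r) ^ 2 = (r ^ 2 - y ^ 2) / r ^ 2 := by field_simp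
  refine ((((hasDerivAt_id y).mul (hinner.sqrt hpos.ne')).add
    (harc.const_mul (r ^ 2))).div_const 2).congr_deriv ?_
  rw [id, h1, Real.sqrt_div' _ (by positivity), Real.sqrt_sq hr.le]
  field_simp
  linear_combination -hs

theorem contDiffAt_semicirclePrimitive {n : WithTop ℕ∞} (hy : |y| < r) :
    ContDiffAt ℝ n (semicirclePrimitive r) y := by
  have hr : 0 < r := (abs_nonneg y).trans_lt hy
  obtain ⟨hy₁, hy₂⟩ := abs_lt.1 hy
  have hpos : r ^ 2 - y ^ 2 ≠ 0 := by nlinarith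
  have harc : ContDiffAt ℝ n (fun t => Real.arcsin (t / r)) y :=
    (Real.contDiffAt_arcsin (by rw [ne_eq, div_eq_iff hr.ne']; linarith)
      (by rw [ne_eq, div_eq_iff hr.ne']; linarith)).comp y (contDiffAt_id.div_const r)
  unfold semicirclePrimitive
  have hsq : ContDiffAt ℝ n (fun t => √(r ^ 2 - t ^ 2)) y :=
    (contDiffAt_const.sub (contDiffAt_id.pow 2)).sqrt hpos
  exact ((contDiffAt_id.mul hsq).add (contDiffAt_const.mul harc)).div_const 2

theorem strictMonoOn_semicirclePrimitive (r : ℝ) :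
    StrictMonoOn (semicirclePrimitive r) (Icc (-r) r) := by
  refine strictMonoOn_of_deriv_pos (convex_Icc _ _)
    (continuous_semicirclePrimitive r).continuousOn fun y hy => ?_
  rw [interior_Icc, mem_Ioo, ← abs_lt] at hy
  rw [(hasDerivAt_semicirclePrimitive hy).deriv]
  obtain ⟨hy₁, hy₂⟩ := abs_lt.1 hy
  exact Real.sqrt_pos.2 (by nlinarith)

theorem semicirclePrimitive_neg (r y : ℝ) :
    semicirclePrimitive r (-y) = -semicirclePrimitive r y := by
  simp only [semicirclePrimitive, neg_div, Real.arcsin_neg, neg_sq]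
  ring

theorem semicirclePrimitive_self (r : ℝ) : semicirclePrimitive r r = π * r ^ 2 / 4 := by
  rcases eq_or_ne r 0 with rfl | hr
  · simp [semicirclePrimitive]
  · simp only [semicirclePrimitive, sub_self, Real.sqrt_zero, mul_zero, div_self hr, arcsin_one,
      zero_add]
    ring

theorem abs_semicirclePrimitive_lt (hy : |y| < r) :
    |semicirclePrimitive r y| < π * r ^ 2 / 4 := by
  obtain ⟨hy₁, hy₂⟩ := abs_lt.1 hy
  have hmem : y ∈ Icc (-r) r := ⟨hy₁.le, hy₂.le⟩
  have hr : -r ≤ r := by linarith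
  refine abs_lt.2 ⟨?_, ?_⟩
  · rw [← semicirclePrimitive_self, ← semicirclePrimitive_neg]
    exact strictMonoOn_semicirclePrimitive r ⟨le_rfl, hr⟩ hmem hy₁
  · rw [← semicirclePrimitive_self]
    exact strictMonoOn_semicirclePrimitive r hmem ⟨hr, le_rfl⟩ hy₂

end Semicircle

theorem abs_im_lt_of_mem_ball {z : ℂ} {r : ℝ} (hz : z ∈ Metric.ball 0 r) : |z.im| < r :=
  (abs_im_le_norm z).trans_lt (mem_ball_zero_iff.1 hz)

theorem abs_re_lt_sqrt_of_mem_ball {z : ℂ} {r : ℝ} (hz : z ∈ Metric.ball 0 r) :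
    |z.re| < √(r ^ 2 - z.im ^ 2) := by
  have h := pow_lt_pow_left₀ (mem_ball_zero_iff.1 hz) (norm_nonneg z) two_ne_zero
  rw [Complex.sq_norm, normSq_apply, ← sq, ← sq] at h
  exact (Real.lt_sqrt (abs_nonneg _)).2 (by rw [sq_abs]; linarith)

section DiscToAnnulus

variable {a b r K y : ℝ}

noncomputable def discAction (a r K y : ℝ) : ℝ := K * semicirclePrimitive r y + a / 2

noncomputable def discWidth (r K y : ℝ) : ℝ := K * √(r ^ 2 - y ^ 2)

noncomputable def discToAnnulus (a r K : ℝ) : ℂ → ℂ :=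
  annulusMap (discAction a r K) (discWidth r K)

theorem hasDerivAt_discAction (hy : |y| < r) :
    HasDerivAt (discAction a r K) (discWidth r K y) y :=
  ((hasDerivAt_semicirclePrimitive hy).const_mul K).add_const _

theorem contDiffAt_discAction {n : WithTop ℕ∞} (hy : |y| < r) :
    ContDiffAt ℝ n (discAction a r K) y :=
  (contDiffAt_semicirclePrimitive hy).const_smul K |>.add contDiffAt_const

theorem strictMonoOn_discAction (hK : 0 < K) : StrictMonoOn (discAction a r K) (Icc (-r) r) :=
  fun _ hx _ hy hxy => add_lt_add_left
    (mul_lt_mul_of_pos_left (strictMonoOn_semicirclePrimitive r hx hy hxy) hK) _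

theorem abs_two_mul_discAction_sub_lt (hK : 0 < K) (hKb : K * (π * r ^ 2) < 4 * b)
    (hy : |y| < r) : |2 * discAction a r K y - a| < 2 * b :=
  calc |2 * discAction a r K y - a| = 2 * K * |semicirclePrimitive r y| := by
        rw [discAction, ← abs_of_pos (by positivity : 0 < 2 * K), ← abs_mul]; ring_nf
    _ < 2 * K * (π * r ^ 2 / 4) := by gcongr; exact abs_semicirclePrimitive_lt hy
    _ < 2 * b := by linarith

theorem discAction_pos (hK : 0 < K) (hKb : K * (π * r ^ 2) < 4 * b) (hba : 2 * b < a)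
    (hy : |y| < r) : 0 < discAction a r K y := by
  linarith [(abs_lt.1 (abs_two_mul_discAction_sub_lt (a := a) hK hKb hy)).1]

theorem contDiffAt_discWidth {n : WithTop ℕ∞} (hy : |y| < r) :
    ContDiffAt ℝ n (discWidth r K) y := by
  obtain ⟨hy₁, hy₂⟩ := abs_lt.1 hy
  exact contDiffAt_const.mul
    ((contDiffAt_const.sub (contDiffAt_id.pow 2)).sqrt (by rw [id]; nlinarith))

theorem discWidth_pos (hK : 0 < K) (hy : |y| < r) : 0 < discWidth r K y := by
  obtain ⟨hy₁, hy₂⟩ := abs_lt.1 hy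
  exact mul_pos hK (Real.sqrt_pos.2 (by nlinarith))

theorem discToAnnulus_injOn (hK : 1 < π * K) (hKb : K * (π * r ^ 2) < 4 * b) (hba : 2 * b < a) :
    InjOn (discToAnnulus a r K) (Metric.ball 0 r) := by
  have hK₀ : 0 < K := pos_of_mul_pos_right (one_pos.trans hK) pi_pos.le
  refine annulusMap_injOn ((strictMonoOn_discAction hK₀).injOn.mono ?_)
    (fun z hz => discAction_pos hK₀ hKb hba (abs_im_lt_of_mem_ball hz)) fun z hz => ?_
  · rintro _ ⟨z, hz, rfl⟩
    exact abs_le.1 (abs_im_lt_of_mem_ball hz).le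
  · have hs : 0 < √(r ^ 2 - z.im ^ 2) := by
      simpa [discWidth, hK₀] using discWidth_pos hK₀ (abs_im_lt_of_mem_ball hz)
    calc |z.re| < √(r ^ 2 - z.im ^ 2) := abs_re_lt_sqrt_of_mem_ball hz
      _ < π * discWidth r K z.im := by rw [discWidth]; nlinarith

theorem discToAnnulus_mapsTo (hK : 0 < K) (hKb : K * (π * r ^ 2) < 4 * b) (hba : 2 * b < a) :
    MapsTo (discToAnnulus a r K) (Metric.ball 0 r)
      {w | a - 2 * b < ‖w‖ ^ 2 ∧ ‖w‖ ^ 2 < a + 2 * b} := by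
  intro z hz
  have hy := abs_im_lt_of_mem_ball hz
  have h := abs_sub_lt_iff.1 (abs_two_mul_discAction_sub_lt (a := a) hK hKb hy)
  have hpos := discAction_pos hK hKb hba hy
  refine ⟨?_, ?_⟩ <;>
    rw [discToAnnulus, norm_annulusMap, Real.sq_sqrt (by linarith)] <;> linarith

theorem contDiffAt_discToAnnulus {n : WithTop ℕ∞} (hK : 0 < K) (hKb : K * (π * r ^ 2) < 4 * b)
    (hba : 2 * b < a) {z : ℂ} (hz : z ∈ Metric.ball 0 r) :
    ContDiffAt ℝ n (discToAnnulus a r K) z :=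
  have hy := abs_im_lt_of_mem_ball hz
  contDiffAt_annulusMap (contDiffAt_discAction hy) (contDiffAt_discWidth hy)
    (discAction_pos hK hKb hba hy) (discWidth_pos hK hy).ne'

theorem areaForm_fderiv_discToAnnulus (hK : 0 < K) (hKb : K * (π * r ^ 2) < 4 * b)
    (hba : 2 * b < a) {z : ℂ} (hz : z ∈ Metric.ball 0 r) (v w : ℂ) :
    areaForm (fderiv ℝ (discToAnnulus a r K) z v) (fderiv ℝ (discToAnnulus a r K) z w) =
      areaForm v w :=
  have hy := abs_im_lt_of_mem_ball hz
  areaForm_fderiv_annulusMap (hasDerivAt_discAction hy)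
    ((contDiffAt_discWidth (n := 1) hy).differentiableAt one_ne_zero)
    (discAction_pos hK hKb hba hy) (discWidth_pos hK hy).ne' v w

end DiscToAnnulus

theorem exists_symplectic_ball_to_annulus {a b r : ℝ} (hba : 2 * b < a) (hr : 0 < r)
    (hrb : r ^ 2 < 4 * b) :
    ∃ ψ : ℂ → ℂ, InjOn ψ (Metric.ball 0 r) ∧
      MapsTo ψ (Metric.ball 0 r) {w | a - 2 * b < ‖w‖ ^ 2 ∧ ‖w‖ ^ 2 < a + 2 * b} ∧
      ∀ z ∈ Metric.ball (0 : ℂ) r, ContDiffAt ℝ ∞ ψ z ∧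
        ∀ v w, areaForm (fderiv ℝ ψ z v) (fderiv ℝ ψ z w) = areaForm v w := by
  obtain ⟨K, hK₁, hK₂⟩ : ∃ K, 1 / π < K ∧ K < 4 * b / (π * r ^ 2) :=
    exists_between (by rw [div_lt_div_iff₀ pi_pos (by positivity)]; nlinarith [pi_pos])
  have hK : 0 < K := lt_trans (by positivity) hK₁
  have hKπ : 1 < π * K := by rwa [div_lt_iff₀' pi_pos] at hK₁
  have hKb : K * (π * r ^ 2) < 4 * b := by rwa [lt_div_iff₀ (by positivity)] at hK₂
  exact ⟨discToAnnulus a r K, discToAnnulus_injOn hKπ hKb hba, discToAnnulus_mapsTo hK hKb hba,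
    fun z hz => ⟨contDiffAt_discToAnnulus hK hKb hba hz,
      areaForm_fderiv_discToAnnulus hK hKb hba hz⟩⟩

theorem polydisc_into_polyannulus_general (n : ℕ) (a b : Fin n → ℝ)
    (hba : ∀ j, b j < a j / 2)
    (ε : ℝ) (hε : 0 < ε) (hεb : ∀ j, ε < 2 * Real.sqrt (b j)) :
    (∃ Ψ : (Fin n → ℂ) → (Fin n → ℂ),
      Set.InjOn Ψ {z : Fin n → ℂ | ∀ j, ‖z j‖ < 2 * Real.sqrt (b j) - ε} ∧
      ContDiffOn ℝ (⊤ : ℕ∞) Ψ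
        {z : Fin n → ℂ | ∀ j, ‖z j‖ < 2 * Real.sqrt (b j) - ε} ∧
      (∀ z ∈ {z : Fin n → ℂ | ∀ j, ‖z j‖ < 2 * Real.sqrt (b j) - ε},
        ∃ D : (Fin n → ℂ) →L[ℝ] (Fin n → ℂ), HasFDerivAt Ψ D z ∧
          ∀ v w : Fin n → ℂ, stdSymp n (D v) (D w) = stdSymp n v w) ∧
      Ψ '' {z : Fin n → ℂ | ∀ j, ‖z j‖ < 2 * Real.sqrt (b j) - ε}
        ⊆ {z : Fin n → ℂ | ∀ j, a j - 2 * b j < ‖z j‖ ^ 2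
            ∧ ‖z j‖ ^ 2 < a j + 2 * b j}) ∧
    {z : Fin n → ℂ | ∀ j, a j - 2 * b j < ‖z j‖ ^ 2
        ∧ ‖z j‖ ^ 2 < a j + 2 * b j}
      ⊆ {z : Fin n → ℂ | ∀ j, ‖z j‖ < Real.sqrt (a j + 2 * b j)} := by
  have hr (j : Fin n) : 0 < 2 * √(b j) - ε := by linarith [hεb j]
  have hrb (j : Fin n) : (2 * √(b j) - ε) ^ 2 < 4 * b j := by
    have hb : 0 < b j := Real.sqrt_pos.1 (by linarith [hr j])
    nlinarith [Real.sq_sqrt hb.le, mul_pos hε (hr j)]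
  choose ψ hinj hmaps hψ using fun j =>
    exists_symplectic_ball_to_annulus (a := a j) (by linarith [hba j]) (hr j) (hrb j)
  have hP : {z : Fin n → ℂ | ∀ j, ‖z j‖ < 2 * √(b j) - ε}
      = univ.pi fun j => Metric.ball 0 (2 * √(b j) - ε) := by
    ext z; simp
  rw [hP]
  refine ⟨⟨Pi.map ψ, InjOn.piMap hinj, fun z hz => ?_, fun z hz => ?_, ?_⟩, ?_⟩
  · exact (ContDiffAt.piMap fun j => (hψ j _ (hz j trivial)).1).contDiffWithinAt
  · exact ⟨_, HasFDerivAt.piMap fun j =>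
      ((hψ j _ (hz j trivial)).1.differentiableAt (by simp)).hasFDerivAt,
      stdSymp_piMap _ fun j => (hψ j _ (hz j trivial)).2⟩
  · rw [image_subset_iff]
    exact fun z hz j => hmaps j (hz j trivial)
  · exact fun z hz j => (Real.lt_sqrt (norm_nonneg _)).2 (hz j).2

/-- **Symplectic embedding of a polydisc into a polyannulus.**
For `0 < bⱼ < aⱼ/2` and every sufficiently small `ε > 0`
(namely `0 < ε < 2√(bⱼ)` for each `j`), the polydisc
`P(2√(b₁)-ε, …, 2√(bₙ)-ε)` embeds symplectically into the polyannulus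
`A(a₁,b₁) × ⋯ × A(aₙ,bₙ)`, which in turn is contained in the polydisc
`P(√(a₁+2b₁), …, √(aₙ+2bₙ))`. -/
theorem polydisc_into_polyannulus (n : ℕ) (hn : 1 ≤ n) (a b : Fin n → ℝ)
    (hb : ∀ j, 0 < b j) (hba : ∀ j, b j < a j / 2)
    (ε : ℝ) (hε : 0 < ε) (hεb : ∀ j, ε < 2 * Real.sqrt (b j)) :
    (∃ Ψ : (Fin n → ℂ) → (Fin n → ℂ),
      Set.InjOn Ψ {z : Fin n → ℂ | ∀ j, ‖z j‖ < 2 * Real.sqrt (b j) - ε} ∧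
      ContDiffOn ℝ (⊤ : ℕ∞) Ψ
        {z : Fin n → ℂ | ∀ j, ‖z j‖ < 2 * Real.sqrt (b j) - ε} ∧
      (∀ z ∈ {z : Fin n → ℂ | ∀ j, ‖z j‖ < 2 * Real.sqrt (b j) - ε},
        ∃ D : (Fin n → ℂ) →L[ℝ] (Fin n → ℂ), HasFDerivAt Ψ D z ∧
          ∀ v w : Fin n → ℂ, stdSymp n (D v) (D w) = stdSymp n v w) ∧
      Ψ '' {z : Fin n → ℂ | ∀ j, ‖z j‖ < 2 * Real.sqrt (b j) - ε}
        ⊆ {z : Fin n → ℂ | ∀ j, a j - 2 * b j < ‖z j‖ ^ 2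
            ∧ ‖z j‖ ^ 2 < a j + 2 * b j}) ∧
    {z : Fin n → ℂ | ∀ j, a j - 2 * b j < ‖z j‖ ^ 2
        ∧ ‖z j‖ ^ 2 < a j + 2 * b j}
      ⊆ {z : Fin n → ℂ | ∀ j, ‖z j‖ < Real.sqrt (a j + 2 * b j)} :=
  polydisc_into_polyannulus_general n a b hba ε hε hεb
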